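/- arXiv:2509.20763 — 4 statements merged into one kernel-verified Lean document; each statement's English description precedes it below -/
import Mathlib

section
/- If G is a finite bipartite simple graph on n vertices in which every vertex has odd degree, then χso(G) = 2 and 2·αod(G) ≥ n. -/
/-!
A proper 2-colouring of a graph all of whose degrees are odd is a strong odd colouring: the
neighbourhood of every vertex lies in the other colour class and has odd size. For the same reason
both colour classes are odd independent sets, and they partition the `n` vertices, so one of them
has at least `n / 2` elements.
-/

open Finset

section OddIndepDefs

variable {V : Type*} [Fintype V] [DecidableEq V]

/-- `S` is an odd independent set in `G`: `S` is independent and every vertex outside `S`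
has either no neighbor in `S` or an odd number of neighbors in `S`. -/
def IsOddIndepSet (G : SimpleGraph V) [DecidableRel G.Adj] (S : Finset V) : Prop :=
  (∀ u ∈ S, ∀ v ∈ S, ¬ G.Adj u v) ∧
  ∀ v ∉ S, (S.filter fun u => G.Adj v u) = ∅ ∨ Odd (S.filter fun u => G.Adj v u).card

/-- The odd independence number: the largest size of an odd independent set. -/
noncomputable def oddIndepNum (G : SimpleGraph V) [DecidableRel G.Adj] : ℕ :=
  sSup {k | ∃ S : Finset V, IsOddIndepSet G S ∧ S.card = k}

/-- The independence number: the largest size of an independent set. -/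
noncomputable def indepNum (G : SimpleGraph V) : ℕ :=
  sSup {k | ∃ S : Finset V, (∀ u ∈ S, ∀ v ∈ S, ¬ G.Adj u v) ∧ S.card = k}

/-- A strong odd coloring with `n` colors: a proper coloring such that for every vertex `v`,
every color appearing in the open neighborhood of `v` appears there an odd number of times. -/
def IsStrongOddColoring (G : SimpleGraph V) [DecidableRel G.Adj] {n : ℕ} (c : V → Fin n) : Prop :=
  (∀ u v, G.Adj u v → c u ≠ c v) ∧
  ∀ v : V, ∀ k : Fin n,
    (univ.filter fun u => G.Adj v u ∧ c u = k) = ∅ ∨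
    Odd (univ.filter fun u => G.Adj v u ∧ c u = k).card

/-- The strong odd chromatic number: minimum number of colors of a strong odd coloring. -/
noncomputable def strongOddChromNum (G : SimpleGraph V) [DecidableRel G.Adj] : ℕ :=
  sInf {n | ∃ c : V → Fin n, IsStrongOddColoring G c}

/-- The chromatic number, as a natural number. -/
noncomputable def chromNum (G : SimpleGraph V) : ℕ :=
  sInf {n | ∃ c : V → Fin n, ∀ u v, G.Adj u v → c u ≠ c v}

/-- The square of a graph: two distinct vertices are adjacent iff they are at distance at most 2,
i.e. adjacent or having a common neighbor. -/
def graphSquare (G : SimpleGraph V) : SimpleGraph V where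
  Adj u v := u ≠ v ∧ (G.Adj u v ∨ ∃ w, G.Adj u w ∧ G.Adj w v)
  symm := ⟨by
    intro u v h
    refine ⟨h.1.symm, ?_⟩
    rcases h.2 with h' | ⟨w, h1, h2⟩
    · exact Or.inl h'.symm
    · exact Or.inr ⟨w, h2.symm, h1.symm⟩⟩
  loopless := ⟨fun v h => h.1 rfl⟩

instance (G : SimpleGraph V) [DecidableRel G.Adj] : DecidableRel (graphSquare G).Adj :=
  fun u v => inferInstanceAs (Decidable (u ≠ v ∧ (G.Adj u v ∨ ∃ w, G.Adj u w ∧ G.Adj w v)))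

end OddIndepDefs

section OddIndep

variable {V : Type*} [Fintype V] (G : SimpleGraph V) [DecidableRel G.Adj]

theorem card_le_oddIndepNum {S : Finset V} (hS : IsOddIndepSet G S) : #S ≤ oddIndepNum G :=
  le_csSup ⟨Fintype.card V, by rintro k ⟨T, -, rfl⟩; exact card_le_univ T⟩ ⟨S, hS, rfl⟩

theorem card_le_mul_oddIndepNum {k : ℕ} (c : V → Fin k)
    (hc : ∀ i, IsOddIndepSet G (univ.filter fun u => c u = i)) :
    Fintype.card V ≤ k * oddIndepNum G :=
  calc Fintype.card V = ∑ i, #(univ.filter fun u => c u = i) :=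
        card_eq_sum_card_fiberwise fun _ _ => mem_univ _
    _ ≤ ∑ _i : Fin k, oddIndepNum G := sum_le_sum fun i _ => card_le_oddIndepNum G (hc i)
    _ = k * oddIndepNum G := by simp

theorem two_le_of_isStrongOddColoring {n : ℕ} {c : V → Fin n} (hc : IsStrongOddColoring G c)
    {u v : V} (huv : G.Adj u v) : 2 ≤ n :=
  Fin.nontrivial_iff_two_le.mp (nontrivial_of_ne _ _ (hc.1 u v huv))

end OddIndep

namespace SimpleGraph.Coloring

variable {V : Type*} {G : SimpleGraph V} (c : G.Coloring (Fin 2))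

theorem eq_of_adj_of_ne {u v : V} {k : Fin 2} (huv : G.Adj v u) (hk : c v ≠ k) : c u = k := by
  have := c.valid huv
  omega

variable [Fintype V] [DecidableRel G.Adj]

theorem card_filter_adj_and_eq {v : V} {k : Fin 2} (hk : c v ≠ k) :
    #(univ.filter fun u => G.Adj v u ∧ c u = k) = G.degree v := by
  rw [← card_neighborFinset_eq_degree, neighborFinset_eq_filter]
  congr 1
  exact filter_congr fun u _ => and_iff_left_of_imp fun huv => c.eq_of_adj_of_ne huv hk

theorem isStrongOddColoring_of_odd_degree (hdeg : ∀ v, Odd (G.degree v)) :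
    IsStrongOddColoring G c := by
  refine ⟨fun u v huv => c.valid huv, fun v k => ?_⟩
  by_cases hk : c v = k
  · left
    exact filter_eq_empty_iff.mpr fun u _ ⟨huv, hu⟩ => c.valid huv (hk.trans hu.symm)
  · right
    rw [c.card_filter_adj_and_eq hk]
    exact hdeg v

theorem isOddIndepSet_colorClass_of_odd_degree (hdeg : ∀ v, Odd (G.degree v)) (i : Fin 2) :
    IsOddIndepSet G (univ.filter fun u => c u = i) := by
  refine ⟨fun u hu v hv huv => ?_, fun v hv => Or.inr ?_⟩
  · simp only [mem_filter, mem_univ, true_and] at hu hv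
    exact c.valid huv (hu.trans hv.symm)
  · simp only [mem_filter, mem_univ, true_and] at hv
    rw [filter_filter]
    simp_rw [and_comm (a := c _ = i)]
    rw [c.card_filter_adj_and_eq hv]
    exact hdeg v

end SimpleGraph.Coloring

theorem strongOddChromNum_eq_two_of_bipartite_odd_degrees_general
    {V : Type*} [Fintype V] [Nonempty V]
    (G : SimpleGraph V) [DecidableRel G.Adj]
    (hbip : G.Colorable 2) (hdeg : ∀ v : V, Odd (G.degree v)) :
    strongOddChromNum G = 2 ∧ Fintype.card V ≤ 2 * oddIndepNum G := by
  obtain ⟨c⟩ := hbip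
  have hsoc : IsStrongOddColoring G c := c.isStrongOddColoring_of_odd_degree hdeg
  obtain ⟨v⟩ := ‹Nonempty V›
  obtain ⟨u, hvu⟩ := G.degree_pos_iff_exists_adj v |>.mp (hdeg v).pos
  refine ⟨le_antisymm (Nat.sInf_le ⟨c, hsoc⟩) ?_, ?_⟩
  · exact le_csInf ⟨2, c, hsoc⟩ fun n ⟨d, hd⟩ => two_le_of_isStrongOddColoring G hd hvu
  · exact card_le_mul_oddIndepNum G c (c.isOddIndepSet_colorClass_of_odd_degree hdeg)

/-- If `G` is a finite bipartite simple graph on `n` vertices in which every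
vertex has odd degree, then `χso(G) = 2` and `2·αod(G) ≥ n`. (Bipartite = 2-colorable.) -/
theorem strongOddChromNum_eq_two_of_bipartite_odd_degrees
    {V : Type*} [Fintype V] [DecidableEq V] [Nonempty V]
    (G : SimpleGraph V) [DecidableRel G.Adj]
    (hbip : G.Colorable 2) (hdeg : ∀ v : V, Odd (G.degree v)) :
    strongOddChromNum G = 2 ∧ Fintype.card V ≤ 2 * oddIndepNum G :=
  strongOddChromNum_eq_two_of_bipartite_odd_degrees_general G hbip hdeg
end

section
/- If d is an even positive integer and G is a finite d-regular simple graph on n vertices, then (2d−1)·αod(G) ≤ (d−1)·n. -/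
open Finset

/-!
Let `S` be an odd independent set in a `d`-regular graph on `n` vertices, `d` even. As `S` is
independent, exactly `d * #S` edges join `S` to its complement. A vertex outside `S` has `0` or an
odd number of neighbours in `S`, hence at most `d - 1` of them because `d` is even. Therefore
`d * #S ≤ (d - 1) * (n - #S)`, which rearranges to `(2d - 1) * #S ≤ (d - 1) * n`.
-/

namespace SimpleGraph

variable {V : Type*} [Fintype V] (G : SimpleGraph V) [DecidableRel G.Adj]

theorem sum_card_filter_adj_compl_eq_sum_degree [DecidableEq V] {S : Finset V}
    (hS : ∀ u ∈ S, ∀ v ∈ S, ¬ G.Adj u v) :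
    ∑ v ∈ Sᶜ, #{u ∈ S | G.Adj v u} = ∑ u ∈ S, G.degree u := by
  refine (sum_card_bipartiteAbove_eq_sum_card_bipartiteBelow (r := fun v u => G.Adj v u)).trans
    (sum_congr rfl fun u hu => ?_)
  rw [← card_neighborFinset_eq_degree]
  congr 1
  ext v
  simp only [bipartiteBelow, mem_filter, mem_compl, mem_neighborFinset]
  exact ⟨fun h => h.2.symm, fun h => ⟨fun hv => hS u hu v hv h, h.symm⟩⟩

theorem card_filter_adj_le_degree_sub_one {S : Finset V} {v : V} (hdeg : Even (G.degree v))
    (hS : #{u ∈ S | G.Adj v u} = 0 ∨ Odd #{u ∈ S | G.Adj v u}) :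
    #{u ∈ S | G.Adj v u} ≤ G.degree v - 1 := by
  have hle : #{u ∈ S | G.Adj v u} ≤ G.degree v := by
    rw [← card_neighborFinset_eq_degree]
    exact card_le_card fun u hu => (mem_neighborFinset G v u).mpr (mem_filter.mp hu).2
  rcases hS with hzero | hodd
  · omega
  · have hne : #{u ∈ S | G.Adj v u} ≠ G.degree v := fun h =>
      Nat.not_even_iff_odd.mpr hodd (h ▸ hdeg)
    omega

end SimpleGraph

section OddIndepSet

variable {V : Type*} [Fintype V] {G : SimpleGraph V} [DecidableRel G.Adj]

theorem IsOddIndepSet.mul_card_le_of_even_regular {S : Finset V} (hS : IsOddIndepSet G S)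
    {d : ℕ} (hd : Even d) (hreg : G.IsRegularOfDegree d) :
    (2 * d - 1) * #S ≤ (d - 1) * Fintype.card V := by
  classical
  obtain ⟨hind, hodd⟩ := hS
  have hout : ∀ v ∈ Sᶜ, #{u ∈ S | G.Adj v u} ≤ d - 1 := fun v hv => by
    rw [← hreg v]
    refine G.card_filter_adj_le_degree_sub_one (hreg v ▸ hd) ?_
    simpa only [card_eq_zero] using hodd v (mem_compl.mp hv)
  have hcount : d * #S ≤ (d - 1) * #Sᶜ := calc
    d * #S = ∑ v ∈ Sᶜ, #{u ∈ S | G.Adj v u} := by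
      rw [G.sum_card_filter_adj_compl_eq_sum_degree hind, sum_congr rfl fun u _ => hreg u,
        sum_const, smul_eq_mul, mul_comm]
    _ ≤ ∑ _v ∈ Sᶜ, (d - 1) := sum_le_sum hout
    _ = (d - 1) * #Sᶜ := by rw [sum_const, smul_eq_mul, mul_comm]
  calc (2 * d - 1) * #S = d * #S + (d - 1) * #S := by rw [← add_mul]; congr 1; omega
    _ ≤ (d - 1) * #Sᶜ + (d - 1) * #S := by gcongr
    _ = (d - 1) * Fintype.card V := by rw [← mul_add, card_compl_add_card]

theorem exists_isOddIndepSet_card_eq_oddIndepNum :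
    ∃ S : Finset V, IsOddIndepSet G S ∧ #S = oddIndepNum G := by
  refine Nat.sSup_mem (s := {k | ∃ S : Finset V, IsOddIndepSet G S ∧ #S = k})
    ⟨0, ∅, ⟨by simp, fun _ _ => Or.inl (filter_empty _)⟩, rfl⟩ ⟨Fintype.card V, ?_⟩
  rintro _ ⟨S, -, rfl⟩
  exact card_le_univ S

end OddIndepSet

theorem oddIndepNum_le_of_even_regular_general
    {V : Type*} [Fintype V]
    (G : SimpleGraph V) [DecidableRel G.Adj] (d : ℕ) (hd : Even d)
    (hreg : G.IsRegularOfDegree d) :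
    (2 * d - 1) * oddIndepNum G ≤ (d - 1) * Fintype.card V := by
  obtain ⟨S, hS, hcard⟩ := exists_isOddIndepSet_card_eq_oddIndepNum (G := G)
  exact hcard ▸ hS.mul_card_le_of_even_regular hd hreg

/-- If `d` is an even positive integer and `G` is a finite `d`-regular simple
graph on `n` vertices, then `(2d−1)·αod(G) ≤ (d−1)·n`. -/
theorem oddIndepNum_le_of_even_regular
    {V : Type*} [Fintype V] [DecidableEq V]
    (G : SimpleGraph V) [DecidableRel G.Adj] (d : ℕ) (hd : Even d) (hd0 : 0 < d)
    (hreg : G.IsRegularOfDegree d) :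
    (2 * d - 1) * oddIndepNum G ≤ (d - 1) * Fintype.card V :=
  oddIndepNum_le_of_even_regular_general G d hd hreg
end

section
/- If G is a finite claw-free simple graph (G contains no induced K_{1,3}), then αod(G) = α(G²) and χso(G) = χ(G²). -/
open Finset

/-- A graph is claw-free if it has no induced `K_{1,3}`: no vertex has three pairwise distinct,
pairwise nonadjacent neighbors. -/
def ClawFree {V : Type*} (G : SimpleGraph V) : Prop :=
  ∀ v x y z : V, G.Adj v x → G.Adj v y → G.Adj v z → x ≠ y → x ≠ z → y ≠ z →
    (G.Adj x y ∨ G.Adj x z ∨ G.Adj y z)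

/-! In a claw-free graph a vertex has at most two neighbours in an independent set, so "no or an
odd number of neighbours in `S`" means "at most one", which is exactly independence of `S` in
`G²`. A strong odd colouring is a partition into odd independent sets, so the colouring statement
follows by applying the same equivalence to every colour class. -/

theorem indep_graphSquare_iff {V : Type*} [DecidableEq V] (G : SimpleGraph V)
    [DecidableRel G.Adj] (S : Finset V) :
    (∀ u ∈ S, ∀ v ∈ S, ¬ (graphSquare G).Adj u v) ↔
      (∀ u ∈ S, ∀ v ∈ S, ¬ G.Adj u v) ∧ ∀ w ∉ S, (S.filter (G.Adj w)).card ≤ 1 := by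
  constructor
  · intro hsq
    refine ⟨fun u hu v hv huv => hsq u hu v hv ⟨huv.ne, Or.inl huv⟩, fun w _ => ?_⟩
    refine Finset.card_le_one.mpr fun u hu v hv => ?_
    rw [Finset.mem_filter] at hu hv
    by_contra hne
    exact hsq u hu.1 v hv.1 ⟨hne, Or.inr ⟨w, hu.2.symm, hv.2⟩⟩
  · rintro ⟨hind, hle⟩ u hu v hv ⟨hne, huv | ⟨w, huw, hwv⟩⟩
    · exact hind u hu v hv huv
    · have hw : w ∉ S := fun hw => hind u hu w hw huw
      exact hne (Finset.card_le_one.mp (hle w hw) u (by simp [hu, huw.symm]) v (by simp [hv, hwv]))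

theorem card_filter_adj_le_two_of_clawFree {V : Type*} {G : SimpleGraph V} [DecidableRel G.Adj]
    (hcf : ClawFree G) {S : Finset V} (hind : ∀ u ∈ S, ∀ v ∈ S, ¬ G.Adj u v) (w : V) :
    (S.filter (G.Adj w)).card ≤ 2 := by
  by_contra! h
  obtain ⟨x, hx, y, hy, z, hz, hxy, hxz, hyz⟩ := Finset.two_lt_card.mp h
  rw [Finset.mem_filter] at hx hy hz
  rcases hcf w x y z hx.2 hy.2 hz.2 hxy hxz hyz with hxy | hxz | hyz
  · exact hind x hx.1 y hy.1 hxy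
  · exact hind x hx.1 z hz.1 hxz
  · exact hind y hy.1 z hz.1 hyz

theorem Finset.eq_empty_or_odd_card_iff_card_le_one {α : Type*} {s : Finset α}
    (hs : s.card ≤ 2) : (s = ∅ ∨ Odd s.card) ↔ s.card ≤ 1 := by
  rw [← Finset.card_eq_zero]
  interval_cases s.card <;> decide

theorem isOddIndepSet_iff_indep_graphSquare {V : Type*} [Fintype V] [DecidableEq V]
    {G : SimpleGraph V} [DecidableRel G.Adj] (hcf : ClawFree G) (S : Finset V) :
    IsOddIndepSet G S ↔ ∀ u ∈ S, ∀ v ∈ S, ¬ (graphSquare G).Adj u v := by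
  rw [indep_graphSquare_iff]
  exact and_congr_right fun hind => forall₂_congr fun w _ =>
    Finset.eq_empty_or_odd_card_iff_card_le_one (card_filter_adj_le_two_of_clawFree hcf hind w)

theorem proper_iff_forall_indep_fiber {V α : Type*} [Fintype V] [DecidableEq α]
    {G : SimpleGraph V} (c : V → α) :
    (∀ u v, G.Adj u v → c u ≠ c v) ↔
      ∀ k, ∀ u ∈ univ.filter (c · = k), ∀ v ∈ univ.filter (c · = k), ¬ G.Adj u v := by
  simp only [Finset.mem_filter, Finset.mem_univ, true_and]
  exact ⟨fun h k u hu v hv huv => h u v huv (hu.trans hv.symm),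
    fun h u v huv hc => h (c u) u rfl v hc.symm huv⟩

theorem isStrongOddColoring_iff_forall_isOddIndepSet_fiber {V : Type*} [Fintype V]
    [DecidableEq V] {G : SimpleGraph V} [DecidableRel G.Adj] {n : ℕ} (c : V → Fin n) :
    IsStrongOddColoring G c ↔ ∀ k, IsOddIndepSet G (univ.filter (c · = k)) := by
  have hfiber (v : V) (k : Fin n) : univ.filter (fun u => G.Adj v u ∧ c u = k) =
      (univ.filter (c · = k)).filter (G.Adj v) := by
    ext u; simp [and_comm]
  simp only [IsStrongOddColoring, IsOddIndepSet, hfiber, proper_iff_forall_indep_fiber]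
  refine ⟨fun ⟨hind, hodd⟩ k => ⟨hind k, fun v _ => hodd v k⟩,
    fun h => ⟨fun k => (h k).1, fun v k => ?_⟩⟩
  by_cases hv : v ∈ univ.filter (c · = k)
  · -- properness leaves `v` no neighbours of its own colour
    left
    exact Finset.filter_false_of_mem fun u hu huv => (h k).1 v hv u hu huv
  · exact (h k).2 v hv

/-- If `G` is a finite claw-free simple graph, then `αod(G) = α(G²)` and
`χso(G) = χ(G²)`. -/
theorem oddIndepNum_eq_indepNum_graphSquare_of_clawFree
    {V : Type*} [Fintype V] [DecidableEq V]
    (G : SimpleGraph V) [DecidableRel G.Adj] (hcf : ClawFree G) :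
    oddIndepNum G = indepNum (graphSquare G) ∧
    strongOddChromNum G = chromNum (graphSquare G) := by
  constructor
  · simp only [oddIndepNum, indepNum, isOddIndepSet_iff_indep_graphSquare hcf]
  · simp only [strongOddChromNum, chromNum, isStrongOddColoring_iff_forall_isOddIndepSet_fiber,
      isOddIndepSet_iff_indep_graphSquare hcf, ← proper_iff_forall_indep_fiber]
end

section
/- For every n ≥ 1, the odd independence number of the path on n vertices is ⌈n/3⌉: αod(P_n) = ⌈n/3⌉. -/
open Finset

/-- The path graph on `n` vertices `0, 1, …, n−1`, where `i` is adjacent to `i+1`. -/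
def pathG (n : ℕ) : SimpleGraph (Fin n) :=
  SimpleGraph.fromRel (fun i j => (i : ℕ) + 1 = (j : ℕ))

instance (n : ℕ) : DecidableRel (pathG n).Adj :=
  fun a b => inferInstanceAs
    (Decidable (a ≠ b ∧ ((a : ℕ) + 1 = (b : ℕ) ∨ (b : ℕ) + 1 = (a : ℕ))))

/-! In a path every vertex has at most two neighbours, its predecessor and its successor. Hence a
set `S` of vertices is odd independent iff any two of its elements are at distance at least `3`:
distance `1` breaks independence, and at distance `2` the vertex in between has exactly two
neighbours in `S`. A `3`-separated subset of `{0, …, n - 1}` meets each block `{3k, 3k+1, 3k+2}`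
at most once, and the multiples of `3` attain this bound, which is `⌈n/3⌉`. -/

section OddIndepSet

variable {V : Type*} {G : SimpleGraph V} [DecidableRel G.Adj] {S : Finset V}

theorem isOddIndepSet_of_card_filter_adj_le_one (hind : ∀ u ∈ S, ∀ v ∈ S, ¬ G.Adj u v)
    (hle : ∀ v ∉ S, #(S.filter (G.Adj v ·)) ≤ 1) : IsOddIndepSet G S := by
  refine ⟨hind, fun v hv => ?_⟩
  rcases Nat.le_one_iff_eq_zero_or_eq_one.mp (hle v hv) with h | h
  · exact Or.inl (card_eq_zero.mp h)
  · exact Or.inr (h ▸ odd_one)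

theorem IsOddIndepSet.filter_adj_ne_pair [DecidableEq V] (hS : IsOddIndepSet G S) {u w : V}
    (huw : u ≠ w) (v : V) : S.filter (G.Adj v ·) ≠ {u, w} := by
  intro h
  have hu : u ∈ S.filter (G.Adj v ·) := h ▸ mem_insert_self u {w}
  rw [mem_filter] at hu
  have hv : v ∉ S := fun hv => hS.1 v hv u hu.1 hu.2
  rcases hS.2 v hv with h0 | hodd
  · simp [h] at h0
  · rw [h, card_pair huw] at hodd
    exact Nat.not_odd_iff_even.mpr even_two hodd

end OddIndepSet

section Separated

variable {n d : ℕ}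

def IsSeparated (d : ℕ) (S : Finset (Fin n)) : Prop :=
  ∀ i ∈ S, ∀ j ∈ S, (i : ℕ) < j → (i : ℕ) + d ≤ j

theorem Fin.card_filter_val_eq_count (p : ℕ → Prop) [DecidablePred p] :
    #(univ.filter fun i : Fin n => p i) = n.count p := by
  rw [Nat.count_eq_card_filter_range, ← Nat.Iio_eq_range, ← Fin.map_valEmbedding_univ, filter_map,
    card_map]
  rfl

theorem isSeparated_filter_modEq_zero (d : ℕ) :
    IsSeparated d (univ.filter fun i : Fin n => (i : ℕ) ≡ 0 [MOD d]) := by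
  intro i hi j hj hij
  simp only [mem_filter, mem_univ, true_and] at hi hj
  have hdvd : d ∣ (j : ℕ) - i := (Nat.modEq_iff_dvd' hij.le).mp (hi.trans hj.symm)
  have := Nat.le_of_dvd (Nat.sub_pos_of_lt hij) hdvd
  omega

theorem IsSeparated.card_le_count (hd : 0 < d) {S : Finset (Fin n)} (hS : IsSeparated d S) :
    #S ≤ n.count (· ≡ 0 [MOD d]) := by
  rw [Nat.count_eq_card_filter_range]
  refine card_le_card_of_injOn (fun i : Fin n => d * (i / d)) (fun i _ => ?_) ?_
  · simp only [coe_filter, mem_range, Set.mem_ofPred_eq, Nat.modEq_zero_iff_dvd]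
    exact ⟨(Nat.mul_div_le i d).trans_lt i.isLt, dvd_mul_right d _⟩
  · suffices ∀ i ∈ S, ∀ j ∈ S, (i : ℕ) < j → (i : ℕ) / d < j / d by
      intro i hi j hj hij
      rcases lt_trichotomy (i : ℕ) j with h | h | h
      · exact absurd (Nat.eq_of_mul_eq_mul_left hd hij) (this i hi j hj h).ne
      · exact Fin.ext h
      · exact absurd (Nat.eq_of_mul_eq_mul_left hd hij) (this j hj i hi h).ne'
    intro i hi j hj hij
    calc (i : ℕ) / d < (i + d) / d := by rw [Nat.add_div_right _ hd]; omega
      _ ≤ j / d := Nat.div_le_div_right (hS i hi j hj hij)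

end Separated

section Path

variable {n : ℕ}

theorem pathG_adj {a b : Fin n} : (pathG n).Adj a b ↔ (a : ℕ) + 1 = b ∨ (b : ℕ) + 1 = a := by
  simp only [pathG, SimpleGraph.fromRel_adj, ne_eq, Fin.ext_iff]
  omega

theorem isOddIndepSet_pathG_iff {S : Finset (Fin n)} :
    IsOddIndepSet (pathG n) S ↔ IsSeparated 3 S := by
  constructor
  · intro hS i hi j hj hij
    by_contra hgap
    have hne : (i : ℕ) + 1 ≠ j := fun h => hS.1 i hi j hj (pathG_adj.mpr (Or.inl h))
    let w : Fin n := ⟨i + 1, by omega⟩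
    refine hS.filter_adj_ne_pair (Fin.ne_of_lt hij) w (ext fun u => ?_)
    simp only [mem_filter, mem_insert, mem_singleton, pathG_adj, Fin.ext_iff, w]
    constructor
    · rintro ⟨-, h⟩
      omega
    · rintro (h | h)
      · exact ⟨Fin.ext h ▸ hi, by omega⟩
      · exact ⟨Fin.ext h ▸ hj, by omega⟩
  · intro hS
    refine isOddIndepSet_of_card_filter_adj_le_one (fun u hu v hv hadj => ?_) (fun v _ => ?_)
    · rcases pathG_adj.mp hadj with h | h
      · have := hS u hu v hv (by omega); omega
      · have := hS v hv u hu (by omega); omega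
    · refine card_le_one.mpr fun a ha b hb => Fin.ext ?_
      simp only [mem_filter, pathG_adj] at ha hb
      rcases lt_trichotomy (a : ℕ) b with h | h | h
      · have := hS a ha.1 b hb.1 h; omega
      · exact h
      · have := hS b hb.1 a ha.1 h; omega

end Path

theorem oddIndepNum_pathGraph_general (n : ℕ) :
    (oddIndepNum (pathG n) : ℤ) = ⌈(n : ℚ) / 3⌉ := by
  have hgreatest : IsGreatest {k | ∃ S, IsOddIndepSet (pathG n) S ∧ #S = k}
      (n.count (· ≡ 0 [MOD 3])) := by
    refine ⟨⟨_, isOddIndepSet_pathG_iff.mpr (isSeparated_filter_modEq_zero 3),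
      Fin.card_filter_val_eq_count (· ≡ 0 [MOD 3])⟩, ?_⟩
    rintro k ⟨S, hS, rfl⟩
    exact (isOddIndepSet_pathG_iff.mp hS).card_le_count three_pos
  rw [oddIndepNum, hgreatest.csSup_eq, Nat.count_modEq_card_eq_ceil n three_pos]
  simp

/-- For every `n ≥ 1`, `αod(P_n) = ⌈n/3⌉`. -/
theorem oddIndepNum_pathGraph (n : ℕ) (hn : 1 ≤ n) :
    (oddIndepNum (pathG n) : ℤ) = ⌈(n : ℚ) / 3⌉ :=
  oddIndepNum_pathGraph_general n
end
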